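/- arXiv:2505.02962 — 2 statements merged into one kernel-verified Lean document; each statement's English description precedes it below -/
import Mathlib

section
/- Let U ⊆ ℝ² be open and w : U → ℝ a smooth solution of the reduced equation with ∂₂²w ≠ 0 and ∂₁∂₂²w ≠ 0 on U. Define θ⁰ := z₂ − z₁·∂₂²w and recursively θ^{k+1} := (∂₂²w/∂₁∂₂²w)·∂₂θ^k for k ≥ 0. Fix m ∈ ℕ and a smooth function ϱ : ℝ^{m+2} → ℝ. Then the pair F¹ := (∂₁∂₂²w/∂₂²w)·ϱ(∂₂²w, θ⁰, …, θ^m), F² := (∂₁∂₂²w)·ϱ(∂₂²w, θ⁰, …, θ^m) is divergence-free on U, i.e. ∂₁F¹ + ∂₂F² = 0 on U. -/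
/-- First-coordinate partial derivative of a function on `ℝ²`. -/
noncomputable def d1 (f : ℝ × ℝ → ℝ) (p : ℝ × ℝ) : ℝ := deriv (fun s => f (s, p.2)) p.1

/-- Second-coordinate partial derivative of a function on `ℝ²`. -/
noncomputable def d2 (f : ℝ × ℝ → ℝ) (p : ℝ × ℝ) : ℝ := deriv (fun s => f (p.1, s)) p.2

/-- `w` is a smooth solution of the reduced equation `∂₁∂₂²w + (∂₂²w)·(∂₂³w) = 0` on `U`. -/
def IsRedSolOn (w : ℝ × ℝ → ℝ) (U : Set (ℝ × ℝ)) : Prop :=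
  ContDiffOn ℝ (⊤ : ℕ∞) w U ∧
    ∀ p ∈ U, d1 (d2 (d2 w)) p + d2 (d2 w) p * d2 (d2 (d2 w)) p = 0

/-- `h` is a smooth solution of the inviscid Burgers equation `∂₁h + h·∂₂h = 0` on `U`. -/
def IsBurgersSolOn (h : ℝ × ℝ → ℝ) (U : Set (ℝ × ℝ)) : Prop :=
  ContDiffOn ℝ (⊤ : ℕ∞) h U ∧ ∀ p ∈ U, d1 h p + h p * d2 h p = 0

/-- The lowest-order `z₂`-integral `ζ = ∂₁∂₂w + ½(∂₂²w)²` of the reduced equation. -/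
noncomputable def zetaInt (w : ℝ × ℝ → ℝ) (p : ℝ × ℝ) : ℝ :=
  d1 (d2 w) p + (1 / 2) * (d2 (d2 w) p) ^ 2

/-- `θ⁰ = z₂ − z₁·∂₂²w`. -/
noncomputable def theta0 (w : ℝ × ℝ → ℝ) (p : ℝ × ℝ) : ℝ := p.2 - p.1 * d2 (d2 w) p

/-- `θ¹ = ∂₂²w/∂₁∂₂²w + z₁`. -/
noncomputable def theta1 (w : ℝ × ℝ → ℝ) (p : ℝ × ℝ) : ℝ :=
  d2 (d2 w) p / d1 (d2 (d2 w)) p + p.1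

/-- `θ² = (∂₂²w/∂₁∂₂²w)·∂₂θ¹`. -/
noncomputable def theta2 (w : ℝ × ℝ → ℝ) (p : ℝ × ℝ) : ℝ :=
  d2 (d2 w) p / d1 (d2 (d2 w)) p * d2 (theta1 w) p

/-- `f` satisfies the generalized-symmetry condition
`∂₂(∂₁(∂₂f) + (∂₂²w)·∂₂(∂₂f)) = 0` of the reduced equation along the solution `w` on `U`. -/
def IsGenSymCharOn (w f : ℝ × ℝ → ℝ) (U : Set (ℝ × ℝ)) : Prop :=
  ∀ p ∈ U, d2 (fun q => d1 (d2 f) q + d2 (d2 w) q * d2 (d2 f) q) p = 0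

/-- The sequence `θ⁰ = z₂ − z₁·∂₂²w`, `θ^{k+1} = (∂₂²w/∂₁∂₂²w)·∂₂θ^k`. -/
noncomputable def thetaSeq (w : ℝ × ℝ → ℝ) : ℕ → ℝ × ℝ → ℝ
  | 0 => fun p => p.2 - p.1 * d2 (d2 w) p
  | k + 1 => fun p => d2 (d2 w) p / d1 (d2 (d2 w)) p * d2 (thetaSeq w k) p

/-- The argument vector `(∂₂²w, θ⁰, …, θ^m)` at a point `p`. -/
noncomputable def argvec (w : ℝ × ℝ → ℝ) (m : ℕ) (p : ℝ × ℝ) : Fin (m + 2) → ℝ :=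
  Fin.cons (d2 (d2 w) p) fun j : Fin (m + 1) => thetaSeq w j p

/-- Partial derivative of a function of `m + 2` real arguments in its `i`-th argument. -/
noncomputable def pdArg {m : ℕ} (g : (Fin (m + 2) → ℝ) → ℝ) (i : Fin (m + 2))
    (a : Fin (m + 2) → ℝ) : ℝ := deriv (fun t => g (Function.update a i t)) (a i)

/-!
Write `u = ∂₂²w`; the reduced equation says that `u` solves the Burgers equation
`∂₁u + u ∂₂u = 0`, i.e. `u` is a first integral of the characteristic field `X = ∂₁ + u ∂₂`.
Differentiating `X f = 0` in `z₂` gives `X (∂₂f) = -(∂₂u) ∂₂f`, so the quotient `∂₂f / ∂₂g` of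
two first integrals is again one. Since `u / ∂₁u = -1 / ∂₂u`, every `θ^{k+1} = -∂₂θ^k / ∂₂u`
is a first integral, and hence so is `g = ϱ(u, θ⁰, …, θ^m)`. Finally `∂₁u / u = -∂₂u`, and the
divergence of `(-∂₂u · g, ∂₁u · g)` is the Jacobian `∂(u, g)/∂(z₁, z₂)`, which vanishes because
`u` and `g` are both constant along the characteristics.
-/

open Topology Set

section PartialDerivatives

variable {F : Type*} [NormedAddCommGroup F] [NormedSpace ℝ F]
variable {U : Set (ℝ × ℝ)} {f g : ℝ × ℝ → ℝ} {p : ℝ × ℝ}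

lemma ContDiffOn.differentiableAt_of_isOpen (hU : IsOpen U) (hf : ContDiffOn ℝ (⊤ : ℕ∞) f U)
    (hp : p ∈ U) : DifferentiableAt ℝ f p :=
  (hf.differentiableOn (by simp)).differentiableAt (hU.mem_nhds hp)

lemma HasFDerivAt.hasDerivAt_fst_slice {g : ℝ × ℝ → F} {L : ℝ × ℝ →L[ℝ] F}
    (hg : HasFDerivAt g L p) : HasDerivAt (fun s => g (s, p.2)) (L (1, 0)) p.1 :=
  hg.comp_hasDerivAt p.1 ((hasDerivAt_id p.1).prodMk (hasDerivAt_const p.1 p.2))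

lemma HasFDerivAt.hasDerivAt_snd_slice {g : ℝ × ℝ → F} {L : ℝ × ℝ →L[ℝ] F}
    (hg : HasFDerivAt g L p) : HasDerivAt (fun s => g (p.1, s)) (L (0, 1)) p.2 :=
  hg.comp_hasDerivAt p.2 ((hasDerivAt_const p.2 p.1).prodMk (hasDerivAt_id p.2))

lemma hasDerivAt_d1 (hf : DifferentiableAt ℝ f p) :
    HasDerivAt (fun s => f (s, p.2)) (d1 f p) p.1 :=
  (hf.comp p.1 (differentiableAt_id.prodMk (differentiableAt_const _))).hasDerivAt

lemma hasDerivAt_d2 (hf : DifferentiableAt ℝ f p) :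
    HasDerivAt (fun s => f (p.1, s)) (d2 f p) p.2 :=
  (hf.comp p.2 ((differentiableAt_const _).prodMk differentiableAt_id)).hasDerivAt

lemma eqOn_d1_fderiv (hU : IsOpen U) (hf : ContDiffOn ℝ (⊤ : ℕ∞) f U) :
    EqOn (d1 f) (fun q => fderiv ℝ f q (1, 0)) U := fun _ hq =>
  (hf.differentiableAt_of_isOpen hU hq).hasFDerivAt.hasDerivAt_fst_slice.deriv

lemma eqOn_d2_fderiv (hU : IsOpen U) (hf : ContDiffOn ℝ (⊤ : ℕ∞) f U) :
    EqOn (d2 f) (fun q => fderiv ℝ f q (0, 1)) U := fun _ hq =>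
  (hf.differentiableAt_of_isOpen hU hq).hasFDerivAt.hasDerivAt_snd_slice.deriv

lemma contDiffOn_d1 (hU : IsOpen U) (hf : ContDiffOn ℝ (⊤ : ℕ∞) f U) :
    ContDiffOn ℝ (⊤ : ℕ∞) (d1 f) U :=
  ((ContinuousLinearMap.apply ℝ ℝ ((1 : ℝ), (0 : ℝ))).contDiff.comp_contDiffOn
    (hf.fderiv_of_isOpen hU (by simp))).congr (eqOn_d1_fderiv hU hf)

lemma contDiffOn_d2 (hU : IsOpen U) (hf : ContDiffOn ℝ (⊤ : ℕ∞) f U) :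
    ContDiffOn ℝ (⊤ : ℕ∞) (d2 f) U :=
  ((ContinuousLinearMap.apply ℝ ℝ ((0 : ℝ), (1 : ℝ))).contDiff.comp_contDiffOn
    (hf.fderiv_of_isOpen hU (by simp))).congr (eqOn_d2_fderiv hU hf)

lemma d1_congr (h : f =ᶠ[𝓝 p] g) : d1 f p = d1 g p :=
  (h.comp_tendsto ((continuous_id.prodMk continuous_const).tendsto p.1)).deriv_eq

lemma d2_congr (h : f =ᶠ[𝓝 p] g) : d2 f p = d2 g p :=
  (h.comp_tendsto ((continuous_const.prodMk continuous_id).tendsto p.2)).deriv_eq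

lemma d2_eq_zero_of_eqOn_zero (hU : IsOpen U) (hp : p ∈ U) (hf : EqOn f 0 U) : d2 f p = 0 :=
  (d2_congr (hf.eventuallyEq_of_mem (hU.mem_nhds hp))).trans (deriv_const _ _)

lemma d1_d2_comm (hU : IsOpen U) (hf : ContDiffOn ℝ (⊤ : ℕ∞) f U) (hp : p ∈ U) :
    d1 (d2 f) p = d2 (d1 f) p := by
  have hfp : ContDiffAt ℝ (⊤ : ℕ∞) f p := hf.contDiffAt (hU.mem_nhds hp)
  have hsymm : IsSymmSndFDerivAt ℝ f p := hfp.isSymmSndFDerivAt <| by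
    simpa [minSmoothness_of_isRCLikeNormedField] using
      WithTop.coe_le_coe.2 (le_top (a := (2 : ℕ∞)))
  have hf' : HasFDerivAt (fderiv ℝ f) (fderiv ℝ (fderiv ℝ f) p) p :=
    ((hfp.fderiv_right (m := (⊤ : ℕ∞)) (by simp)).differentiableAt (by simp)).hasFDerivAt
  calc d1 (d2 f) p = d1 (fun q => fderiv ℝ f q (0, 1)) p :=
        d1_congr ((eqOn_d2_fderiv hU hf).eventuallyEq_of_mem (hU.mem_nhds hp))
    _ = fderiv ℝ (fderiv ℝ f) p (1, 0) (0, 1) :=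
        ((ContinuousLinearMap.apply ℝ ℝ ((0 : ℝ), (1 : ℝ))).hasFDerivAt.comp_hasDerivAt _
          hf'.hasDerivAt_fst_slice).deriv
    _ = fderiv ℝ (fderiv ℝ f) p (0, 1) (1, 0) := hsymm _ _
    _ = d2 (fun q => fderiv ℝ f q (1, 0)) p :=
        ((ContinuousLinearMap.apply ℝ ℝ ((1 : ℝ), (0 : ℝ))).hasFDerivAt.comp_hasDerivAt _
          hf'.hasDerivAt_snd_slice).deriv.symm
    _ = d2 (d1 f) p :=
        (d2_congr ((eqOn_d1_fderiv hU hf).eventuallyEq_of_mem (hU.mem_nhds hp))).symm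

end PartialDerivatives

def IsFirstIntegralOn (u f : ℝ × ℝ → ℝ) (U : Set (ℝ × ℝ)) : Prop :=
  ContDiffOn ℝ (⊤ : ℕ∞) f U ∧ ∀ p ∈ U, d1 f p + u p * d2 f p = 0

section FirstIntegrals

variable {U : Set (ℝ × ℝ)} {u f g : ℝ × ℝ → ℝ} {p : ℝ × ℝ}

lemma IsBurgersSolOn.isFirstIntegralOn (hu : IsBurgersSolOn u U) : IsFirstIntegralOn u u U := hu

lemma IsFirstIntegralOn.congr (hU : IsOpen U) (hf : IsFirstIntegralOn u f U) (h : EqOn g f U) :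
    IsFirstIntegralOn u g U := by
  refine ⟨hf.1.congr h, fun p hp => ?_⟩
  have hev : g =ᶠ[𝓝 p] f := h.eventuallyEq_of_mem (hU.mem_nhds hp)
  rw [d1_congr hev, d2_congr hev]
  exact hf.2 p hp

lemma IsFirstIntegralOn.neg (hU : IsOpen U) (hf : IsFirstIntegralOn u f U) :
    IsFirstIntegralOn u (fun q => -f q) U := by
  refine ⟨hf.1.neg, fun p hp => ?_⟩
  have hfp := hf.1.differentiableAt_of_isOpen hU hp
  have h1 : d1 (fun q => -f q) p = -d1 f p := (hasDerivAt_d1 hfp).neg.deriv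
  have h2 : d2 (fun q => -f q) p = -d2 f p := (hasDerivAt_d2 hfp).neg.deriv
  rw [h1, h2]
  linear_combination -hf.2 p hp

lemma IsFirstIntegralOn.d1_d2_add_mul_d2_d2 (hU : IsOpen U) (hu : ContDiffOn ℝ (⊤ : ℕ∞) u U)
    (hf : IsFirstIntegralOn u f U) (hp : p ∈ U) :
    d1 (d2 f) p + u p * d2 (d2 f) p = -(d2 u p * d2 f p) := by
  have hderiv : d2 (fun q => d1 f q + u q * d2 f q) p
      = d2 (d1 f) p + (d2 u p * d2 f p + u p * d2 (d2 f) p) :=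
    ((hasDerivAt_d2 ((contDiffOn_d1 hU hf.1).differentiableAt_of_isOpen hU hp)).add
      ((hasDerivAt_d2 (hu.differentiableAt_of_isOpen hU hp)).mul
        (hasDerivAt_d2 ((contDiffOn_d2 hU hf.1).differentiableAt_of_isOpen hU hp)))).deriv
  rw [d2_eq_zero_of_eqOn_zero hU hp fun q hq => hf.2 q hq] at hderiv
  rw [d1_d2_comm hU hf.1 hp]
  linear_combination -hderiv

lemma IsFirstIntegralOn.d2_div_d2 (hU : IsOpen U) (hu : ContDiffOn ℝ (⊤ : ℕ∞) u U)
    (hf : IsFirstIntegralOn u f U) (hg : IsFirstIntegralOn u g U) (hg0 : ∀ p ∈ U, d2 g p ≠ 0) :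
    IsFirstIntegralOn u (fun q => d2 f q / d2 g q) U := by
  have hf2 := contDiffOn_d2 hU hf.1
  have hg2 := contDiffOn_d2 hU hg.1
  refine ⟨hf2.div hg2 hg0, fun p hp => ?_⟩
  have hf2p := hf2.differentiableAt_of_isOpen hU hp
  have hg2p := hg2.differentiableAt_of_isOpen hU hp
  have h1 : d1 (fun q => d2 f q / d2 g q) p
      = (d1 (d2 f) p * d2 g p - d2 f p * d1 (d2 g) p) / d2 g p ^ 2 :=
    ((hasDerivAt_d1 hf2p).div (hasDerivAt_d1 hg2p) (hg0 p hp)).deriv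
  have h2 : d2 (fun q => d2 f q / d2 g q) p
      = (d2 (d2 f) p * d2 g p - d2 f p * d2 (d2 g) p) / d2 g p ^ 2 :=
    ((hasDerivAt_d2 hf2p).div (hasDerivAt_d2 hg2p) (hg0 p hp)).deriv
  rw [h1, h2]
  have hfD := hf.d1_d2_add_mul_d2_d2 hU hu hp
  have hgD := hg.d1_d2_add_mul_d2_d2 hU hu hp
  have hg0p := hg0 p hp
  field_simp
  linear_combination d2 g p * hfD - d2 f p * hgD

lemma IsFirstIntegralOn.comp {ι : Type*} [Fintype ι] (hU : IsOpen U) {Φ : (ι → ℝ) → ℝ}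
    (hΦ : ContDiff ℝ (⊤ : ℕ∞) Φ) {f : ι → ℝ × ℝ → ℝ} (hf : ∀ i, IsFirstIntegralOn u (f i) U) :
    IsFirstIntegralOn u (fun q => Φ (fun i => f i q)) U := by
  refine ⟨hΦ.comp_contDiffOn (contDiffOn_pi.2 fun i => (hf i).1), fun p hp => ?_⟩
  have hfp i := (hf i).1.differentiableAt_of_isOpen hU hp
  set L := fderiv ℝ Φ (fun i => f i p)
  have hΦp : HasFDerivAt Φ L (fun i => f i p) := (hΦ.differentiable (by simp) _).hasFDerivAt
  have h1 : d1 (fun q => Φ fun i => f i q) p = L fun i => d1 (f i) p :=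
    (hΦp.comp_hasDerivAt p.1 (hasDerivAt_pi.2 fun i => hasDerivAt_d1 (hfp i))).deriv
  have h2 : d2 (fun q => Φ fun i => f i q) p = L fun i => d2 (f i) p :=
    (hΦp.comp_hasDerivAt p.2 (hasDerivAt_pi.2 fun i => hasDerivAt_d2 (hfp i))).deriv
  rw [h1, h2, ← smul_eq_mul, ← L.map_smul, ← L.map_add]
  convert L.map_zero
  funext i
  exact (hf i).2 p hp

end FirstIntegrals

section ReducedEquation

variable {U : Set (ℝ × ℝ)} {u g w : ℝ × ℝ → ℝ} {p : ℝ × ℝ}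

lemma IsBurgersSolOn.d1_add_d2_current_eq_zero (hU : IsOpen U) (hu : IsBurgersSolOn u U)
    (hg : IsFirstIntegralOn u g U) (hp : p ∈ U) :
    d1 (fun q => -d2 u q * g q) p + d2 (fun q => d1 u q * g q) p = 0 := by
  have hu1 := (contDiffOn_d1 hU hu.1).differentiableAt_of_isOpen hU hp
  have hu2 := (contDiffOn_d2 hU hu.1).differentiableAt_of_isOpen hU hp
  have hgp := hg.1.differentiableAt_of_isOpen hU hp
  have h1 : d1 (fun q => -d2 u q * g q) p = -d1 (d2 u) p * g p + -d2 u p * d1 g p :=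
    ((hasDerivAt_d1 hu2).neg.mul (hasDerivAt_d1 hgp)).deriv
  have h2 : d2 (fun q => d1 u q * g q) p = d2 (d1 u) p * g p + d1 u p * d2 g p :=
    ((hasDerivAt_d2 hu1).mul (hasDerivAt_d2 hgp)).deriv
  rw [h1, h2, d1_d2_comm hU hu.1 hp]
  linear_combination d2 g p * hu.2 p hp - d2 u p * hg.2 p hp

lemma IsRedSolOn.isBurgersSolOn (hU : IsOpen U) (hw : IsRedSolOn w U) :
    IsBurgersSolOn (d2 (d2 w)) U :=
  ⟨contDiffOn_d2 hU (contDiffOn_d2 hU hw.1), hw.2⟩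

lemma isFirstIntegralOn_thetaSeq (hU : IsOpen U) (hw : IsRedSolOn w U)
    (h122 : ∀ p ∈ U, d1 (d2 (d2 w)) p ≠ 0) (k : ℕ) :
    IsFirstIntegralOn (d2 (d2 w)) (thetaSeq w k) U := by
  have hu := hw.isBurgersSolOn hU
  induction k with
  | zero =>
    refine ⟨contDiff_snd.contDiffOn.sub (contDiff_fst.contDiffOn.mul hu.1), fun p hp => ?_⟩
    have hup := hu.1.differentiableAt_of_isOpen hU hp
    have h1 : d1 (thetaSeq w 0) p = 0 - (1 * d2 (d2 w) p + p.1 * d1 (d2 (d2 w)) p) :=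
      ((hasDerivAt_const p.1 p.2).sub ((hasDerivAt_id p.1).mul (hasDerivAt_d1 hup))).deriv
    have h2 : d2 (thetaSeq w 0) p = 1 - (0 * d2 (d2 w) p + p.1 * d2 (d2 (d2 w)) p) :=
      ((hasDerivAt_id p.2).sub ((hasDerivAt_const p.2 p.1).mul (hasDerivAt_d2 hup))).deriv
    rw [h1, h2]
    linear_combination -p.1 * hu.2 p hp
  | succ k ih =>
    have hu2 : ∀ p ∈ U, d2 (d2 (d2 w)) p ≠ 0 := fun p hp h =>
      h122 p hp (by linear_combination hu.2 p hp - d2 (d2 w) p * h)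
    refine ((ih.d2_div_d2 hU hu.1 hu.isFirstIntegralOn hu2).neg hU).congr hU fun p hp => ?_
    have hu0 : d2 (d2 w) p ≠ 0 := fun h =>
      h122 p hp (by linear_combination hu.2 p hp - d2 (d2 (d2 w)) p * h)
    have hu2p := hu2 p hp
    have h122p := h122 p hp
    change d2 (d2 w) p / d1 (d2 (d2 w)) p * d2 (thetaSeq w k) p
      = -(d2 (thetaSeq w k) p / d2 (d2 (d2 w)) p)
    field_simp
    linear_combination d2 (thetaSeq w k) p * hu.2 p hp

end ReducedEquation

/-- The family of conserved currents of the reduced equation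
parameterized by an arbitrary smooth function `ϱ` of `∂₂²w` and `θ⁰, …, θ^m`. -/
theorem statement12 (U : Set (ℝ × ℝ)) (hU : IsOpen U) (w : ℝ × ℝ → ℝ)
    (hred : IsRedSolOn w U)
    (h22 : ∀ p ∈ U, d2 (d2 w) p ≠ 0) (h122 : ∀ p ∈ U, d1 (d2 (d2 w)) p ≠ 0)
    (m : ℕ) (ϱ : (Fin (m + 2) → ℝ) → ℝ) (hϱ : ContDiff ℝ (⊤ : ℕ∞) ϱ) :
    ∀ p ∈ U,
      d1 (fun q => d1 (d2 (d2 w)) q / d2 (d2 w) q * ϱ (argvec w m q)) p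
        + d2 (fun q => d1 (d2 (d2 w)) q * ϱ (argvec w m q)) p = 0 := by
  have hu := hred.isBurgersSolOn hU
  have hθ := isFirstIntegralOn_thetaSeq hU hred h122
  have hϱθ : IsFirstIntegralOn (d2 (d2 w)) (fun q => ϱ (argvec w m q)) U := by
    convert IsFirstIntegralOn.comp hU hϱ
      (f := Fin.cons (d2 (d2 w)) fun j : Fin (m + 1) => thetaSeq w j)
      (Fin.cases hu.isFirstIntegralOn fun j => hθ j) with q i
    cases i using Fin.cases <;> rfl
  intro p hp
  have hF1 : (fun q => d1 (d2 (d2 w)) q / d2 (d2 w) q * ϱ (argvec w m q))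
      =ᶠ[𝓝 p] fun q => -d2 (d2 (d2 w)) q * ϱ (argvec w m q) := by
    filter_upwards [hU.mem_nhds hp] with q hq
    have := h22 q hq
    rw [eq_neg_of_add_eq_zero_left (hu.2 q hq)]
    field_simp
  rw [d1_congr hF1]
  exact hu.d1_add_d2_current_eq_zero hU hϱθ hp
end

section
/- Let Ω := {(z₁,z₂) ∈ ℝ² : z₁ ≠ 0 and z₂² + z₁ > 0} and write S := (z₂² + z₁)^{1/2}. Then the function h(z₁,z₂) := (z₂ + S)/(2z₁) is a smooth solution of the inviscid Burgers equation ∂₁h + h·∂₂h = 0 on Ω, and the function w(z₁,z₂) := (z₂³ + S³)/(12z₁) + (z₂/4)·log|z₂ + S| − (1/4)S is a smooth solution of the reduced equation ∂₁∂₂²w + (∂₂²w)·(∂₂³w) = 0 on Ω (note that z₂ + S ≠ 0 on Ω). -/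
open Set Filter Topology

section PartialDerivatives

variable {f g : ℝ × ℝ → ℝ} {U : Set (ℝ × ℝ)} {p : ℝ × ℝ}

lemma d1_congr_of_eqOn (hU : IsOpen U) (hfg : EqOn f g U) (hp : p ∈ U) : d1 f p = d1 g p := by
  refine EventuallyEq.deriv_eq ?_
  have hmem : ∀ᶠ u in 𝓝 p.1, (u, p.2) ∈ U :=
    (continuous_id.prodMk continuous_const).continuousAt.preimage_mem_nhds (hU.mem_nhds hp)
  filter_upwards [hmem] with u hu using hfg hu

lemma d2_congr_of_eqOn (hU : IsOpen U) (hfg : EqOn f g U) (hp : p ∈ U) : d2 f p = d2 g p := by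
  refine EventuallyEq.deriv_eq ?_
  have hmem : ∀ᶠ t in 𝓝 p.2, (p.1, t) ∈ U :=
    (continuous_const.prodMk continuous_id).continuousAt.preimage_mem_nhds (hU.mem_nhds hp)
  filter_upwards [hmem] with t ht using hfg ht

lemma isRedSolOn_of_eqOn_d2_d2 {w h : ℝ × ℝ → ℝ} (hU : IsOpen U)
    (hw : ContDiffOn ℝ (⊤ : ℕ∞) w U) (hwh : EqOn (d2 (d2 w)) h U)
    (hh : ∀ p ∈ U, d1 h p + h p * d2 h p = 0) : IsRedSolOn w U :=
  ⟨hw, fun p hp => by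
    rw [d1_congr_of_eqOn hU hwh hp, d2_congr_of_eqOn hU hwh hp, hwh hp]
    exact hh p hp⟩

end PartialDerivatives

namespace BurgersSqrt

def domain : Set (ℝ × ℝ) := {p | p.1 ≠ 0 ∧ 0 < p.2 ^ 2 + p.1}

noncomputable def root (p : ℝ × ℝ) : ℝ := √(p.2 ^ 2 + p.1)

noncomputable def burgersSol (p : ℝ × ℝ) : ℝ := (p.2 + root p) / (2 * p.1)

noncomputable def burgersSolPrim (p : ℝ × ℝ) : ℝ :=
  p.2 * (p.2 + root p) / (4 * p.1) + Real.log (p.2 + root p) / 4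

/-- `Real.log` is already `log |·|`, so the absolute value of the informal `w` can be dropped. -/
noncomputable def reducedSol (p : ℝ × ℝ) : ℝ :=
  (p.2 ^ 3 + root p ^ 3) / (12 * p.1) + p.2 / 4 * Real.log (p.2 + root p) - (1 / 4) * root p

lemma isOpen_domain : IsOpen domain :=
  (isOpen_compl_singleton.preimage continuous_fst).inter
    (isOpen_Ioi.preimage ((continuous_snd.pow 2).add continuous_fst))

lemma root_pos_and_sq {p : ℝ × ℝ} (hp : p ∈ domain) :
    0 < root p ∧ root p ^ 2 = p.2 ^ 2 + p.1 :=
  ⟨Real.sqrt_pos.mpr hp.2, Real.sq_sqrt hp.2.le⟩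

section Slices

variable {x y s : ℝ}

lemma root_eq (hs : 0 < s) (hs2 : s ^ 2 = y ^ 2 + x) : root (x, y) = s := by
  rw [root, ← hs2, Real.sqrt_sq hs.le]

lemma add_ne_zero_of_sq_eq (hs2 : s ^ 2 = y ^ 2 + x) (hx : x ≠ 0) : y + s ≠ 0 := by
  intro h
  have : s ^ 2 = y ^ 2 := by rw [show s = -y by linarith]; ring
  exact hx (by linarith)

lemma hasDerivAt_root_snd (hs : 0 < s) (hs2 : s ^ 2 = y ^ 2 + x) :
    HasDerivAt (fun t => root (x, t)) (y / s) y := by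
  have hsq : √(y ^ 2 + x) = s := root_eq hs hs2
  have hpos : 0 < y ^ 2 + x := hs2 ▸ pow_pos hs 2
  have h : HasDerivAt (fun t => root (x, t)) _ y :=
    (Real.hasDerivAt_sqrt hpos.ne').comp y (((hasDerivAt_id' y).pow 2).add_const x)
  rw [hsq] at h
  refine h.congr_deriv ?_
  field_simp
  simp

lemma hasDerivAt_root_fst (hs : 0 < s) (hs2 : s ^ 2 = y ^ 2 + x) :
    HasDerivAt (fun u => root (u, y)) (1 / (2 * s)) x := by
  have hsq : √(y ^ 2 + x) = s := root_eq hs hs2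
  have hpos : 0 < y ^ 2 + x := hs2 ▸ pow_pos hs 2
  have h : HasDerivAt (fun u => root (u, y)) _ x :=
    (Real.hasDerivAt_sqrt hpos.ne').comp x ((hasDerivAt_id' x).const_add (y ^ 2))
  rw [hsq] at h
  simpa using h

lemma hasDerivAt_add_root_snd (hs : 0 < s) (hs2 : s ^ 2 = y ^ 2 + x) :
    HasDerivAt (fun t => t + root (x, t)) ((y + s) / s) y := by
  refine (hasDerivAt_id' y).add (hasDerivAt_root_snd hs hs2) |>.congr_deriv ?_
  field_simp
  ring

lemma hasDerivAt_log_add_root_snd (hs : 0 < s) (hs2 : s ^ 2 = y ^ 2 + x) (hx : x ≠ 0) :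
    HasDerivAt (fun t => Real.log (t + root (x, t))) s⁻¹ y := by
  have hys := add_ne_zero_of_sq_eq hs2 hx
  refine (hasDerivAt_add_root_snd hs hs2).log (by rwa [root_eq hs hs2]) |>.congr_deriv ?_
  rw [root_eq hs hs2]
  field_simp

lemma hasDerivAt_burgersSol_snd (hs : 0 < s) (hs2 : s ^ 2 = y ^ 2 + x) :
    HasDerivAt (fun t => burgersSol (x, t)) ((y + s) / (2 * x * s)) y := by
  refine (hasDerivAt_add_root_snd hs hs2).div_const (2 * x) |>.congr_deriv ?_
  ring

lemma hasDerivAt_burgersSol_fst (hs : 0 < s) (hs2 : s ^ 2 = y ^ 2 + x) (hx : x ≠ 0) :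
    HasDerivAt (fun u => burgersSol (u, y)) (1 / (4 * x * s) - (y + s) / (2 * x ^ 2)) x := by
  have hnum : HasDerivAt (fun u => y + root (u, y)) (1 / (2 * s)) x :=
    (hasDerivAt_root_fst hs hs2).const_add y
  have hden : HasDerivAt (fun u : ℝ => 2 * u) 2 x := by
    simpa using (hasDerivAt_id' x).const_mul 2
  refine hnum.div hden (by simpa using hx) |>.congr_deriv ?_
  rw [root_eq hs hs2]
  field_simp
  ring

lemma hasDerivAt_burgersSolPrim_snd (hs : 0 < s) (hs2 : s ^ 2 = y ^ 2 + x) (hx : x ≠ 0) :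
    HasDerivAt (fun t => burgersSolPrim (x, t)) ((y + s) / (2 * x)) y := by
  have hprod : HasDerivAt (fun t => t * (t + root (x, t))) (y + s + y * ((y + s) / s)) y := by
    refine (hasDerivAt_id' y).mul (hasDerivAt_add_root_snd hs hs2) |>.congr_deriv ?_
    rw [root_eq hs hs2, one_mul]
  refine (hprod.div_const (4 * x)).add ((hasDerivAt_log_add_root_snd hs hs2 hx).div_const 4)
    |>.congr_deriv ?_
  obtain rfl : x = s ^ 2 - y ^ 2 := by linarith
  field_simp
  ring

lemma hasDerivAt_reducedSol_snd (hs : 0 < s) (hs2 : s ^ 2 = y ^ 2 + x) (hx : x ≠ 0) :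
    HasDerivAt (fun t => reducedSol (x, t))
      (y * (y + s) / (4 * x) + Real.log (y + s) / 4) y := by
  have hcube :
      HasDerivAt (fun t => t ^ 3 + root (x, t) ^ 3) (3 * y ^ 2 + 3 * s ^ 2 * (y / s)) y := by
    refine (hasDerivAt_pow 3 y).add ((hasDerivAt_root_snd hs hs2).pow 3) |>.congr_deriv ?_
    rw [root_eq hs hs2]
    norm_num
  have hlog : HasDerivAt (fun t => t / 4 * Real.log (t + root (x, t)))
      (Real.log (y + s) / 4 + y / 4 * s⁻¹) y := by
    refine ((hasDerivAt_id' y).div_const 4).mul (hasDerivAt_log_add_root_snd hs hs2 hx)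
      |>.congr_deriv ?_
    rw [root_eq hs hs2]
    ring
  refine ((hcube.div_const (12 * x)).add hlog).sub ((hasDerivAt_root_snd hs hs2).const_mul (1 / 4))
    |>.congr_deriv ?_
  field_simp
  ring

lemma burgers_identity (hs : 0 < s) (hs2 : s ^ 2 = y ^ 2 + x) (hx : x ≠ 0) :
    1 / (4 * x * s) - (y + s) / (2 * x ^ 2) + (y + s) / (2 * x) * ((y + s) / (2 * x * s)) = 0 := by
  obtain rfl : x = s ^ 2 - y ^ 2 := by linarith
  field_simp
  ring

end Slices

lemma add_root_ne_zero {p : ℝ × ℝ} (hp : p ∈ domain) : p.2 + root p ≠ 0 :=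
  add_ne_zero_of_sq_eq (root_pos_and_sq hp).2 hp.1

lemma burgersSol_burgers : ∀ p ∈ domain, d1 burgersSol p + burgersSol p * d2 burgersSol p = 0 := by
  intro p hp
  obtain ⟨hs, hs2⟩ := root_pos_and_sq hp
  rw [show d1 burgersSol p = _ from (hasDerivAt_burgersSol_fst hs hs2 hp.1).deriv,
    show d2 burgersSol p = _ from (hasDerivAt_burgersSol_snd hs hs2).deriv]
  exact burgers_identity hs hs2 hp.1

lemma eqOn_d2_reducedSol : EqOn (d2 reducedSol) burgersSolPrim domain := fun _ hp =>
  (hasDerivAt_reducedSol_snd (root_pos_and_sq hp).1 (root_pos_and_sq hp).2 hp.1).deriv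

lemma eqOn_d2_d2_reducedSol : EqOn (d2 (d2 reducedSol)) burgersSol domain := by
  intro p hp
  obtain ⟨hs, hs2⟩ := root_pos_and_sq hp
  rw [d2_congr_of_eqOn isOpen_domain eqOn_d2_reducedSol hp]
  exact (hasDerivAt_burgersSolPrim_snd hs hs2 hp.1).deriv

lemma contDiffAt_root {p : ℝ × ℝ} (hp : p ∈ domain) : ContDiffAt ℝ (⊤ : ℕ∞) root p :=
  (Real.contDiffAt_sqrt hp.2.ne').comp p ((contDiff_snd.pow 2).add contDiff_fst).contDiffAt

lemma contDiffOn_burgersSol : ContDiffOn ℝ (⊤ : ℕ∞) burgersSol domain := fun p hp =>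
  (contDiff_snd.contDiffAt.add (contDiffAt_root hp)).div
    (contDiff_const.mul contDiff_fst).contDiffAt (by simpa using hp.1) |>.contDiffWithinAt

lemma contDiffOn_reducedSol : ContDiffOn ℝ (⊤ : ℕ∞) reducedSol domain := fun p hp => by
  have hroot := contDiffAt_root hp
  have hcube : ContDiffAt ℝ (⊤ : ℕ∞) (fun q : ℝ × ℝ => (q.2 ^ 3 + root q ^ 3) / (12 * q.1)) p :=
    ((contDiff_snd.pow 3).contDiffAt.add (hroot.pow 3)).div
      (contDiff_const.mul contDiff_fst).contDiffAt (by simpa using hp.1)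
  have hlog : ContDiffAt ℝ (⊤ : ℕ∞) (fun q : ℝ × ℝ => q.2 / 4 * Real.log (q.2 + root q)) p :=
    (contDiff_snd.div_const 4).contDiffAt.mul
      ((contDiff_snd.contDiffAt.add hroot).log (add_root_ne_zero hp))
  exact ((hcube.add hlog).sub (contDiffAt_const.mul hroot)).contDiffWithinAt

end BurgersSqrt

open BurgersSqrt in
/-- Solutions obtained by reduction 1.6^{1/2}: the solution
`h = (z₂ + √(z₂² + z₁))/(2z₁)` of the inviscid Burgers equation and the corresponding
solution `w` of the reduced equation on `Ω = {z₁ ≠ 0, z₂² + z₁ > 0}`. -/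
theorem statement16 :
    (∀ p : ℝ × ℝ, p.1 ≠ 0 → 0 < p.2 ^ 2 + p.1 → p.2 + Real.sqrt (p.2 ^ 2 + p.1) ≠ 0) ∧
    IsBurgersSolOn (fun p => (p.2 + Real.sqrt (p.2 ^ 2 + p.1)) / (2 * p.1))
      {p : ℝ × ℝ | p.1 ≠ 0 ∧ 0 < p.2 ^ 2 + p.1} ∧
    IsRedSolOn (fun p =>
        (p.2 ^ 3 + (Real.sqrt (p.2 ^ 2 + p.1)) ^ 3) / (12 * p.1)
          + p.2 / 4 * Real.log |p.2 + Real.sqrt (p.2 ^ 2 + p.1)|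
          - (1 / 4) * Real.sqrt (p.2 ^ 2 + p.1))
      {p : ℝ × ℝ | p.1 ≠ 0 ∧ 0 < p.2 ^ 2 + p.1} := by
  simp only [Real.log_abs]
  exact ⟨fun p hx hpos => add_root_ne_zero ⟨hx, hpos⟩,
    ⟨contDiffOn_burgersSol, burgersSol_burgers⟩,
    isRedSolOn_of_eqOn_d2_d2 isOpen_domain contDiffOn_reducedSol eqOn_d2_d2_reducedSol
      burgersSol_burgers⟩
end
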